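/- arXiv:quant-ph/0501126 — 5 statements merged into one kernel-verified Lean document; each statement's English description precedes it below -/
import Mathlib

section
/- Let q be a prime power, m a positive integer with m ≠ 2, and n = q^{2m} − 1. Let α be a primitive element of F_{q^{2m}}, and for an integer δ with 2 ≤ δ ≤ n let C ⊆ F_{q^2}^n be the primitive, narrow-sense BCH code of designed distance δ over F_{q^2}, i.e. C = {c ∈ F_{q^2}^n : Σ_{i=0}^{n−1} c_i α^{ij} = 0 in F_{q^{2m}} for every integer j with 1 ≤ j ≤ δ−1}. Then the Hermitian dual code C^{⊥h} is contained in C if and only if δ ≤ q^{m + [m is even]} − 1 − (q^2 − 2)·[m is even], where [P] equals 1 if P holds and 0 otherwise. -/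
/-!
Let `n = q^{2m} - 1`. The BCH code `C` is cut out by the syndromes `c(α^a)`, `0 < a < δ`, and by
Frobenius also by those at `a q^{2k}`. The test words are trace words `i ↦ Tr_{E/F}(γ α^{iu})`:
pairing one with a word `x` gives `Σ_k γ^{q^{2k}} x(α^{u q^{2k}})`, and a nonzero `q²`-linearized
polynomial of `q²`-degree `< m` has a nonroot `γ ∈ E`. Taking `u = jq` for a syndrome index `j`,
resp. `u ≡ -a q^{2k}` for an offending `a`, shows that `C^{⊥h} ⊆ C` iff no `0 < a, b < δ` and
`k < m` satisfy `n ∣ a q^{2k+1} + b`.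

That condition is a size argument. Swapping `a` and `b` turns an odd exponent `r` into `2m - r`,
so one may take `r ≤ m` for odd `m` and `r ≤ m - 1` for even `m`; then `a q^r + b < n` below the
bound, while at the bound `(q^m - 1) q^m + (q^m - 1) = n`, resp.
`(q^{m+1} - q^2 + 1) q^{m-1} + (q^{m+1} - q^{m-1} - 1) = n` (the second `b` is small enough only
for `m ≥ 4`).
-/

/-- Primitive, narrow-sense BCH code of designed distance `δ`. -/
def bchCode (F : Type*) {E : Type*} [Field F] [Field E] [Algebra F E]
    (n : ℕ) (α : E) (δ : ℕ) : Submodule F (Fin n → F) where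
  carrier := {c | ∀ j : ℕ, 1 ≤ j → j ≤ δ - 1 →
    ∑ i : Fin n, algebraMap F E (c i) * α ^ ((i : ℕ) * j) = 0}
  zero_mem' := by intro j _ _; simp
  add_mem' := by
    intro a b ha hb j h1 h2
    have hA := ha j h1 h2
    have hB := hb j h1 h2
    simp only [Pi.add_apply, map_add, add_mul]
    rw [Finset.sum_add_distrib, hA, hB, add_zero]
  smul_mem' := by
    intro r a ha j h1 h2
    have hA := ha j h1 h2
    simp only [Pi.smul_apply, smul_eq_mul, map_mul, mul_assoc]
    rw [← Finset.mul_sum, hA, mul_zero]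

/-- Hermitian dual (with respect to exponent `q`) of a set of codewords
over `F_{q^2}`. -/
def hermDualSet {K : Type*} [Field K] (q : ℕ) {n : ℕ} (C : Set (Fin n → K)) :
    Set (Fin n → K) :=
  {y | ∀ x ∈ C, ∑ i, (y i) ^ q * x i = 0}

open Finset Polynomial Module

theorem sum_pow_mul_eq_ite {E : Type*} [Field E] {n : ℕ} {α : E} (hα : orderOf α = n) (s : ℕ) :
    ∑ i : Fin n, α ^ ((i : ℕ) * s) = if n ∣ s then (n : E) else 0 := by
  simp_rw [mul_comm _ s, pow_mul]
  rw [Fin.sum_univ_eq_sum_range (fun i => (α ^ s) ^ i)]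
  split_ifs with h
  · simp [orderOf_dvd_iff_pow_eq_one.mp (hα ▸ h)]
  · have hs : α ^ s ≠ 1 := mt orderOf_dvd_of_pow_eq_one (hα ▸ h)
    rw [geom_sum_eq hs, ← pow_mul, mul_comm, pow_mul, ← hα, pow_orderOf_eq_one, one_pow,
      sub_self, zero_div]

theorem exists_sum_pow_pow_mul_ne_zero {K : Type*} [Field K] [Fintype K] {Q d : ℕ}
    (hQ : 1 < Q) (hd : Q ^ (d - 1) < Fintype.card K) (c : ℕ → K) {k₀ : ℕ} (hk₀ : k₀ < d)
    (hc : c k₀ ≠ 0) : ∃ γ : K, ∑ k ∈ range d, γ ^ Q ^ k * c k ≠ 0 := by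
  set P : K[X] := ∑ k ∈ range d, C (c k) * X ^ Q ^ k
  have hcoeff : P.coeff (Q ^ k₀) = c k₀ := by
    rw [finsetSum_coeff, sum_eq_single k₀ (fun k _ hk => ?_) (by simp [hk₀])]
    · simp
    · rw [coeff_C_mul_X_pow, if_neg fun h => hk (Nat.pow_right_injective hQ h).symm]
  have hdeg : P.natDegree < Fintype.card K := by
    refine (natDegree_sum_le_of_forall_le _ _ fun k hk => ?_).trans_lt hd
    refine (natDegree_C_mul_X_pow_le _ _).trans (Nat.pow_le_pow_right hQ.le ?_)
    have := mem_range.1 hk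
    omega
  by_contra! h
  refine hc (hcoeff ▸ ?_)
  rw [eq_zero_of_natDegree_lt_card_of_eval_eq_zero P Function.injective_id (fun γ => ?_) hdeg,
    coeff_zero]
  simpa only [P, eval_finsetSum, eval_mul, eval_C, eval_pow, eval_X, id_eq, mul_comm] using h γ

theorem dvd_mul_pow_add_swap {n q N a b r : ℕ} (hn : n + 1 = q ^ N) (hr : r ≤ N)
    (h : n ∣ a * q ^ r + b) : n ∣ b * q ^ (N - r) + a := by
  have hexpand : (a * q ^ r + b) * q ^ (N - r) = n * a + (b * q ^ (N - r) + a) := by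
    rw [add_mul, mul_assoc, ← pow_add, Nat.add_sub_cancel' hr, ← hn]
    ring
  exact (Nat.dvd_add_right (dvd_mul_right n a)).1 (hexpand ▸ h.mul_right _)

namespace bchCode

section Syndrome

variable {F E : Type*} [Field F] [Field E] [Algebra F E] {n : ℕ}

def syndrome (α : E) (c : Fin n → F) (s : ℕ) : E :=
  ∑ i, algebraMap F E (c i) * α ^ ((i : ℕ) * s)

theorem mem_iff_syndrome {α : E} {δ : ℕ} {c : Fin n → F} :
    c ∈ bchCode F n α δ ↔ ∀ j, 1 ≤ j → j ≤ δ - 1 → syndrome α c j = 0 :=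
  Iff.rfl

theorem syndrome_congr {α : E} (hα : orderOf α = n) (c : Fin n → F) {s s' : ℕ}
    (h : s ≡ s' [MOD n]) : syndrome α c s = syndrome α c s' := by
  refine sum_congr rfl fun i _ => ?_
  rw [← pow_mod_orderOf α, ← pow_mod_orderOf α (_ * s'), hα, h.mul_left (i : ℕ)]

theorem syndrome_pow_expChar_pow (p : ℕ) [ExpChar E p] (α : E) (c : Fin n → F) (s e : ℕ) :
    syndrome α (fun i => c i ^ p ^ e) (s * p ^ e) = syndrome α c s ^ p ^ e := by
  rw [syndrome, syndrome, sum_pow_char_pow]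
  refine sum_congr rfl fun i _ => ?_
  rw [map_pow, mul_pow, ← pow_mul, mul_assoc]

theorem syndrome_mul_card_pow [Fintype F] (α : E) (c : Fin n → F) (s k : ℕ) :
    syndrome α c (s * Fintype.card F ^ k) = syndrome α c s ^ Fintype.card F ^ k := by
  have hφ (x : E) : (FiniteField.frobeniusAlgHom F E ^ k) x = x ^ Fintype.card F ^ k := by
    rw [AlgHom.coe_pow, FiniteField.coe_frobeniusAlgHom, pow_iterate]
  rw [syndrome, syndrome, ← hφ, map_sum]
  refine sum_congr rfl fun i _ => ?_
  rw [map_mul, AlgHom.commutes, hφ, ← pow_mul, mul_assoc]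

end Syndrome

section TraceWord

variable {F E : Type*} [Field F] [Field E] [Fintype E] [Algebra F E] {n : ℕ}

noncomputable def traceWord (α γ : E) (u : ℕ) : Fin n → F :=
  fun i => Algebra.trace F E (γ * α ^ ((i : ℕ) * u))

theorem sum_algebraMap_traceWord_mul [Fintype F] (α γ : E) (u : ℕ) (v : Fin n → E) :
    ∑ i, algebraMap F E (traceWord α γ u i) * v i =
      ∑ k ∈ range (finrank F E),
        γ ^ Fintype.card F ^ k * ∑ i, v i * α ^ ((i : ℕ) * (u * Fintype.card F ^ k)) := by
  simp only [traceWord, FiniteField.algebraMap_trace_eq_sum_pow, Nat.card_eq_fintype_card,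
    sum_mul, mul_sum]
  rw [sum_comm]
  refine sum_congr rfl fun k _ => sum_congr rfl fun i _ => ?_
  rw [mul_pow, ← pow_mul]
  ring

theorem syndrome_traceWord [Fintype F] {α : E} (hα : orderOf α = n) (γ : E) (u z : ℕ) :
    syndrome α (traceWord α γ u : Fin n → F) z =
      ∑ k ∈ range (finrank F E), γ ^ Fintype.card F ^ k *
        if n ∣ u * Fintype.card F ^ k + z then (n : E) else 0 := by
  rw [syndrome, sum_algebraMap_traceWord_mul]
  refine sum_congr rfl fun k _ => ?_
  rw [← sum_pow_mul_eq_ite hα]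
  congr 1
  refine sum_congr rfl fun i _ => ?_
  rw [← pow_add]
  ring_nf

theorem algebraMap_sum_traceWord_mul [Fintype F] (α γ : E) (u : ℕ) (x : Fin n → F) :
    algebraMap F E (∑ i, traceWord α γ u i * x i) =
      ∑ k ∈ range (finrank F E),
        γ ^ Fintype.card F ^ k * syndrome α x (u * Fintype.card F ^ k) := by
  simp only [map_sum, map_mul]
  exact sum_algebraMap_traceWord_mul α γ u _

theorem traceWord_pow (p : ℕ) [ExpChar E p] (α γ : E) (u e : ℕ) (i : Fin n) :
    traceWord α γ u i ^ p ^ e = traceWord (F := F) α (γ ^ p ^ e) (u * p ^ e) i := by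
  apply (algebraMap F E).injective
  simp only [traceWord, map_pow, FiniteField.algebraMap_trace_eq_sum_pow, sum_pow_char_pow]
  refine sum_congr rfl fun k _ => ?_
  ring

theorem card_pow_finrank_sub_one_lt [Fintype F] :
    Fintype.card F ^ (finrank F E - 1) < Fintype.card E := by
  rw [Module.card_eq_pow_finrank (K := F) (V := E)]
  exact Nat.pow_lt_pow_right Fintype.one_lt_card (Nat.sub_lt finrank_pos one_pos)

end TraceWord

/-- `Z ∩ (-q Z) ≠ ∅ (mod n)` for the defining set `Z = {a q^{2k} : 0 < a < δ, k < d}` of the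
BCH code of length `n` over `F_{q²}`, where `d` is the degree over `F_{q²}` of the field of `α`. -/
def HermitianOverlap (n q d δ : ℕ) : Prop :=
  ∃ a b k, 0 < a ∧ a < δ ∧ 0 < b ∧ b < δ ∧ k < d ∧ n ∣ a * q ^ (2 * k + 1) + b

section HermitianDual

variable {F E : Type*} [Field F] [Fintype F] [Field E] [Fintype E] [Algebra F E] {n : ℕ}

theorem traceWord_mem {α : E} (hα : orderOf α = n) (γ : E) {u δ : ℕ}
    (hu : ∀ k < finrank F E, ∀ b, 0 < b → b < δ → ¬ n ∣ u * Fintype.card F ^ k + b) :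
    traceWord α γ u ∈ bchCode F n α δ := by
  refine mem_iff_syndrome.2 fun b hb hbδ => ?_
  rw [syndrome_traceWord hα]
  refine sum_eq_zero fun k hk => ?_
  rw [if_neg (hu k (mem_range.1 hk) b hb (by omega)), mul_zero]

theorem traceWord_mem_hermDualSet {p e : ℕ} [ExpChar E p] {α : E} (hα : orderOf α = n)
    (γ : E) {u b δ : ℕ} (hb : 0 < b) (hbδ : b < δ) (hu : u * p ^ e ≡ b [MOD n]) :
    traceWord α γ u ∈ hermDualSet (p ^ e) (bchCode F n α δ : Set (Fin n → F)) := by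
  intro x hx
  apply (algebraMap F E).injective
  simp_rw [traceWord_pow p, map_zero, algebraMap_sum_traceWord_mul]
  refine sum_eq_zero fun k _ => ?_
  rw [syndrome_congr hα x (hu.mul_right _), syndrome_mul_card_pow,
    mem_iff_syndrome.1 hx b hb (by omega), zero_pow (by positivity), mul_zero]

theorem hermDualSet_subset_of_not_hermitianOverlap {p e : ℕ} [ExpChar E p]
    (hF : Fintype.card F = (p ^ e) ^ 2) {α : E} (hα : orderOf α = n) {δ : ℕ}
    (h : ¬ HermitianOverlap n (p ^ e) (finrank F E) δ) :
    hermDualSet (p ^ e) (bchCode F n α δ : Set (Fin n → F)) ⊆ bchCode F n α δ := by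
  intro y hy
  refine mem_iff_syndrome.2 fun j hj hjδ => ?_
  by_contra hyj
  have hx (γ : E) : traceWord α γ (j * p ^ e) ∈ bchCode F n α δ :=
    traceWord_mem hα γ fun k hk b hb hbδ hdvd => h ⟨j, b, k, hj, by omega, hb, hbδ, hk, by
      rwa [hF, ← pow_mul, mul_assoc, ← pow_succ'] at hdvd⟩
  obtain ⟨γ, hγ⟩ := exists_sum_pow_pow_mul_ne_zero Fintype.one_lt_card
    card_pow_finrank_sub_one_lt
    (fun k => syndrome α (fun i => y i ^ p ^ e) (j * p ^ e * Fintype.card F ^ k))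
    (finrank_pos (R := F) (M := E))
    (by rw [pow_zero, mul_one, syndrome_pow_expChar_pow]; exact pow_ne_zero _ hyj)
  apply hγ
  rw [← algebraMap_sum_traceWord_mul, ← map_zero (algebraMap F E), ← hy _ (hx γ)]
  simp_rw [mul_comm]

theorem not_hermitianOverlap_of_hermDualSet_subset {p e : ℕ} [ExpChar E p]
    (hF : Fintype.card F = (p ^ e) ^ 2) {α : E} (hα : orderOf α = n)
    (hn : n + 1 = Fintype.card E) {δ : ℕ}
    (hsub : hermDualSet (p ^ e) (bchCode F n α δ : Set (Fin n → F)) ⊆ bchCode F n α δ) :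
    ¬ HermitianOverlap n (p ^ e) (finrank F E) δ := by
  rintro ⟨a, b, k₀, ha, haδ, hb, hbδ, -, hdvd⟩
  set s := a * Fintype.card F ^ k₀
  have hn1 : 1 ≤ n := by
    have := Fintype.one_lt_card (α := E)
    omega
  -- `u = (n - 1) s ≡ -s`, so the `k = 0` term of the syndrome at `s` of the trace word is `n ≠ 0`.
  have hu : (n - 1) * s * p ^ e ≡ b [MOD n] := by
    have h0 := (ZMod.natCast_eq_zero_iff _ n).2 hdvd
    rw [← ZMod.natCast_eq_natCast_iff]
    push_cast [s, Nat.cast_sub hn1, hF, ZMod.natCast_self] at h0 ⊢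
    linear_combination -h0
  have hn0 : (n : E) ≠ 0 := by
    have h0 : ((n + 1 : ℕ) : E) = 0 := hn ▸ FiniteField.cast_card_eq_zero E
    intro h
    simp [h] at h0
  obtain ⟨γ, hγ⟩ := exists_sum_pow_pow_mul_ne_zero Fintype.one_lt_card
    card_pow_finrank_sub_one_lt
    (fun k => if n ∣ (n - 1) * s * Fintype.card F ^ k + s then (n : E) else 0)
    (finrank_pos (R := F) (M := E))
    (by rwa [if_pos ⟨s, by rw [pow_zero, mul_one, ← add_one_mul, Nat.sub_add_cancel hn1]⟩])
  apply hγ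
  have hw := hsub (traceWord_mem_hermDualSet hα γ hb hbδ hu)
  rw [← syndrome_traceWord hα, syndrome_mul_card_pow, mem_iff_syndrome.1 hw a ha (by omega),
    zero_pow (by positivity)]

theorem hermDualSet_subset_iff {q : ℕ} (hq : IsPrimePow q) (hF : Fintype.card F = q ^ 2)
    {α : E} (hα : orderOf α = n) (hn : n + 1 = Fintype.card E) (δ : ℕ) :
    hermDualSet q (bchCode F n α δ : Set (Fin n → F)) ⊆ bchCode F n α δ ↔
      ¬ HermitianOverlap n q (finrank F E) δ := by
  obtain ⟨p, e, hp, -, rfl⟩ := hq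
  have : Fact p.Prime := ⟨Nat.prime_iff.2 hp⟩
  have : CharP F p := charP_of_card_eq_prime_pow (hF.trans (pow_mul p e 2).symm)
  have : CharP E p := charP_of_injective_algebraMap (algebraMap F E).injective p
  exact ⟨not_hermitianOverlap_of_hermDualSet_subset hF hα hn,
    hermDualSet_subset_of_not_hermitianOverlap hF hα⟩

end HermitianDual

theorem not_hermitianOverlap_of_le {q m δ t : ℕ} (hq : 0 < q)
    (ht : ∀ k < m, 2 * k + 1 ≤ t ∨ 2 * m - (2 * k + 1) ≤ t)
    (hδ : (δ - 1) * q ^ t + (δ - 1) < q ^ (2 * m) - 1) :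
    ¬ HermitianOverlap (q ^ (2 * m) - 1) q m δ := by
  have hn : q ^ (2 * m) - 1 + 1 = q ^ (2 * m) := Nat.sub_add_cancel (Nat.one_le_pow _ _ hq)
  have hsmall {a b r : ℕ} (ha : 0 < a) (haδ : a < δ) (hbδ : b < δ) (hr : r ≤ t) :
      ¬ q ^ (2 * m) - 1 ∣ a * q ^ r + b := by
    refine Nat.not_dvd_of_pos_of_lt (by positivity) (lt_of_le_of_lt ?_ hδ)
    gcongr <;> omega
  rintro ⟨a, b, k, ha, haδ, hb, hbδ, hk, hdvd⟩
  rcases ht k hk with hr | hr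
  · exact hsmall ha haδ hbδ hr hdvd
  · exact hsmall hb hbδ haδ hr (dvd_mul_pow_add_swap hn (by omega) hdvd)

theorem hermitianOverlap_iff_of_odd {q m δ : ℕ} (hq : 2 ≤ q) (hm : Odd m) :
    HermitianOverlap (q ^ (2 * m) - 1) q m δ ↔ q ^ m - 1 < δ := by
  obtain ⟨l, rfl⟩ := hm
  obtain ⟨R, hR⟩ : ∃ R, q ^ (2 * l + 1) = R + 2 :=
    ⟨q ^ (2 * l + 1) - 2, (Nat.sub_add_cancel ((Nat.le_self_pow (by omega) q).trans' hq)).symm⟩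
  have hsq : q ^ (2 * (2 * l + 1)) = (R + 2) * (R + 2) := by rw [two_mul, pow_add, hR]
  rw [hR]
  constructor
  · contrapose!
    refine fun hδ => not_hermitianOverlap_of_le (t := 2 * l + 1) (by omega) (by omega) ?_
    rw [hsq, hR]
    calc (δ - 1) * (R + 2) + (δ - 1) ≤ R * (R + 2) + R := by gcongr <;> omega
      _ < (R + 2) * (R + 2) - 1 := by ring_nf; omega
  · refine fun hδ => ⟨R + 1, R + 1, l, by omega, by omega, by omega, by omega, by omega, ?_⟩
    rw [hsq, hR]
    exact ⟨1, by ring_nf; omega⟩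

theorem hermitianOverlap_iff_of_even {q m δ : ℕ} (hq : 2 ≤ q) (hm : Even m) (hm4 : 4 ≤ m) :
    HermitianOverlap (q ^ (2 * m) - 1) q m δ ↔ q ^ (m + 1) - q ^ 2 + 1 < δ := by
  obtain ⟨l, rfl⟩ : ∃ l, m = 2 * l + 2 := ⟨m / 2 - 1, by obtain ⟨r, hr⟩ := hm; omega⟩
  have hsq : q ^ (2 * (2 * l + 2)) = q ^ 2 * q ^ (2 * l + 1) * q ^ (2 * l + 1) := by
    rw [← pow_add, ← pow_add]
    ring_nf
  have hm1 : q ^ (2 * l + 2 + 1) = q ^ 2 * q ^ (2 * l + 1) := by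
    rw [← pow_add]
    ring_nf
  have hQ : 4 ≤ q ^ 2 := by nlinarith
  have hP : q ^ 2 ≤ q ^ (2 * l + 1) := Nat.pow_le_pow_right (by omega) (by omega)
  rw [hm1]
  generalize q ^ 2 = Q at *
  have hQP : Q ≤ Q * q ^ (2 * l + 1) := Nat.le_mul_of_pos_right _ (by omega)
  have hn : 1 ≤ Q * q ^ (2 * l + 1) * q ^ (2 * l + 1) := Nat.mul_pos (by omega) (by omega)
  constructor
  · contrapose!
    refine fun hδ => not_hermitianOverlap_of_le (t := 2 * l + 1) (by omega) (by omega) ?_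
    rw [hsq]
    generalize q ^ (2 * l + 1) = P at *
    have hD : δ - 1 ≤ Q * P - Q := by omega
    generalize δ - 1 = D at *
    zify [hQP, hn] at hD ⊢
    nlinarith
  · intro hδ
    have h4 : 4 * q ^ (2 * l + 1) ≤ Q * q ^ (2 * l + 1) := Nat.mul_le_mul_right _ hQ
    refine ⟨Q * q ^ (2 * l + 1) - Q + 1, Q * q ^ (2 * l + 1) - q ^ (2 * l + 1) - 1, l,
      by omega, by omega, by omega, by omega, by omega, ⟨1, ?_⟩⟩
    rw [hsq, Nat.sub_sub]
    generalize q ^ (2 * l + 1) = P at *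
    zify [hQP, hn, (by omega : P + 1 ≤ Q * P)]
    ring

theorem hermitianOverlap_iff {q m δ : ℕ} (hq : 2 ≤ q) (hm : 0 < m) (hm2 : m ≠ 2) :
    HermitianOverlap (q ^ (2 * m) - 1) q m δ ↔
      q ^ (m + (if Even m then 1 else 0)) - 1 - (q ^ 2 - 2) * (if Even m then 1 else 0) < δ := by
  by_cases h : Even m
  · have hm4 : 4 ≤ m := by obtain ⟨r, rfl⟩ := h; omega
    have : q ^ 2 ≤ q ^ (m + 1) := Nat.pow_le_pow_right (by omega) (by omega)
    have : 4 ≤ q ^ 2 := by nlinarith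
    rw [hermitianOverlap_iff_of_even hq h hm4, if_pos h]
    omega
  · rw [hermitianOverlap_iff_of_odd hq (Nat.not_even_iff_odd.1 h), if_neg h, add_zero, mul_zero,
      Nat.sub_zero]

end bchCode

theorem bch_contains_hermitian_dual_iff_general
    (q m : ℕ) (hq : IsPrimePow q) (hm2 : m ≠ 2)
    (F E : Type*) [Field F] [Fintype F] [Field E] [Fintype E] [Algebra F E]
    (hF : Fintype.card F = q ^ 2) (hE : Fintype.card E = q ^ (2 * m))
    (α : E) (hα : orderOf α = q ^ (2 * m) - 1)
    (δ : ℕ) :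
    hermDualSet q (bchCode F (q ^ (2 * m) - 1) α δ : Set (Fin (q ^ (2 * m) - 1) → F)) ⊆
        (bchCode F (q ^ (2 * m) - 1) α δ : Set (Fin (q ^ (2 * m) - 1) → F)) ↔
      δ ≤ q ^ (m + (if Even m then 1 else 0)) - 1 - (q ^ 2 - 2) * (if Even m then 1 else 0) := by
  have hn : q ^ (2 * m) - 1 + 1 = Fintype.card E := by
    rw [hE, Nat.sub_add_cancel (Nat.one_le_pow _ _ hq.pos)]
  have hd : Module.finrank F E = m := by
    have h := Module.card_eq_pow_finrank (K := F) (V := E)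
    rw [hE, hF, ← pow_mul] at h
    have := Nat.pow_right_injective hq.two_le h
    omega
  rw [bchCode.hermDualSet_subset_iff hq hF hα hn, hd,
    bchCode.hermitianOverlap_iff hq.two_le (hd ▸ Module.finrank_pos) hm2, not_lt]

/-- A primitive, narrow-sense BCH code of length `q^{2m} - 1` over `F_{q^2}`,
`m ≠ 2`, contains its Hermitian dual code iff its designed distance `δ`
satisfies `δ ≤ q^{m + [m even]} - 1 - (q^2 - 2)·[m even]`. -/
theorem bch_contains_hermitian_dual_iff
    (q m : ℕ) (hq : IsPrimePow q) (hm : 0 < m) (hm2 : m ≠ 2)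
    (F E : Type*) [Field F] [Fintype F] [Field E] [Fintype E] [Algebra F E]
    (hF : Fintype.card F = q ^ 2) (hE : Fintype.card E = q ^ (2 * m))
    (α : E) (hα : orderOf α = q ^ (2 * m) - 1)
    (δ : ℕ) (hδ1 : 2 ≤ δ) (hδ2 : δ ≤ q ^ (2 * m) - 1) :
    hermDualSet q (bchCode F (q ^ (2 * m) - 1) α δ : Set (Fin (q ^ (2 * m) - 1) → F)) ⊆
        (bchCode F (q ^ (2 * m) - 1) α δ : Set (Fin (q ^ (2 * m) - 1) → F)) ↔
      δ ≤ q ^ (m + (if Even m then 1 else 0)) - 1 - (q ^ 2 - 2) * (if Even m then 1 else 0) :=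
  bch_contains_hermitian_dual_iff_general q m hq hm2 F E hF hE α hα δ
end

section
/- Let q be a prime power and n a positive integer with gcd(n, q) = 1. Let α be a primitive n-th root of unity in an extension field of F_{q^2}, and let Z ⊆ {0, 1, …, n−1} be a set closed under multiplication by q^2 modulo n (a union of q^2-ary cyclotomic cosets). Let C = {c ∈ F_{q^2}^n : Σ_{i=0}^{n−1} c_i α^{iz} = 0 for all z ∈ Z} be the cyclic code over F_{q^2} with defining set Z. Then the Hermitian dual C^{⊥h} is contained in C if and only if Z ∩ Z^{−q} = ∅, where Z^{−q} = {(−qz) mod n : z ∈ Z}. -/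
/-- Cyclic code of length `n` over `F` with defining set `Z`. -/
def cyclicCode (F : Type*) {E : Type*} [Field F] [Field E] [Algebra F E]
    (n : ℕ) (α : E) (Z : Finset ℕ) : Submodule F (Fin n → F) where
  carrier := {c | ∀ z ∈ Z, ∑ i : Fin n, algebraMap F E (c i) * α ^ ((i : ℕ) * z) = 0}
  zero_mem' := by intro z _; simp
  add_mem' := by
    intro a b ha hb z hz
    have hA := ha z hz
    have hB := hb z hz
    simp only [Pi.add_apply, map_add, add_mul]
    rw [Finset.sum_add_distrib, hA, hB, add_zero]
  smul_mem' := by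
    intro r a ha z hz
    have hA := ha z hz
    simp only [Pi.smul_apply, smul_eq_mul, map_mul, mul_assoc]
    rw [← Finset.mul_sum, hA, mul_zero]

/-!
Both directions test codewords against the trace words `i ↦ Tr_{K/F}(β α^{iw})` over
`K = F(α)`. Since `Tr x = ∑_{k < [K:F]} x^{Q^k}` with `Q = |F| = q²`, evaluating a trace word at
`α^e` gives the additive polynomial `∑_k β^{Q^k} ∑_i α^{i(wQ^k + e)}` in `β`, and the inner sum is
`n` or `0` according as `n ∣ wQ^k + e` or not. Moreover `∑ x_i Tr(β α^{iw}) = Tr(β x(α^w))`,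
where `x(α^w) = ∑ x_i α^{iw}`.

If `a = -qz` with `a, z ∈ Z`, the `q`-th power of the trace word for `w = a` is Hermitian-orthogonal
to `C` (as `t^{q²} = t` on `F`), yet the `q`-th power of its evaluation at `α^z` is a polynomial in
`β` of degree `< |K|` whose linear coefficient is `n ≠ 0`, so it is not in `C`.
If `Z` and `-qZ` are disjoint, the trace words for `w = qz` lie in `C`, so a word `y` of the
Hermitian dual satisfies `Tr(β · y(α^z)^q) = 0` for all `β`, and the trace form is nondegenerate.
-/

open Finset Polynomial

theorem Nat.sub_mod_mod_eq_iff_dvd {n x z : ℕ} (hz : z < n) :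
    (n - x % n) % n = z ↔ n ∣ x + z := by
  have hx : x % n ≤ n := (Nat.mod_lt x (by omega)).le
  rw [← Nat.mod_eq_of_lt hz, ← ZMod.natCast_eq_natCast_iff', ← ZMod.natCast_eq_zero_iff,
    Nat.mod_eq_of_lt hz, Nat.cast_sub hx, ZMod.natCast_mod, ZMod.natCast_self,
    Nat.cast_add, zero_sub, neg_eq_iff_eq_neg, eq_neg_iff_add_eq_zero]

theorem mul_pow_mod_mem {Z : Finset ℕ} {n Q : ℕ} (hZn : ∀ z ∈ Z, z < n)
    (hZQ : ∀ z ∈ Z, z * Q % n ∈ Z) {z : ℕ} (hz : z ∈ Z) (k : ℕ) : z * Q ^ k % n ∈ Z := by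
  induction k with
  | zero => simpa [Nat.mod_eq_of_lt (hZn z hz)] using hz
  | succ k ih => simpa [pow_succ, ← mul_assoc, Nat.mul_mod_left, Nat.mod_mul_mod] using hZQ _ ih

section

variable {F K : Type*} [Field F] [Field K] [Algebra F K] {n : ℕ}

theorem eq_zero_of_forall_sum_mul_pow_pow_eq_zero [Finite K] {Q m : ℕ} (hQ : 1 < Q)
    (hK : Nat.card K = Q ^ m) {c : ℕ → K} (h : ∀ β : K, ∑ k ∈ range m, c k * β ^ Q ^ k = 0)
    {k : ℕ} (hk : k < m) : c k = 0 := by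
  have := Fintype.ofFinite K
  set P : K[X] := ∑ k ∈ range m, C (c k) * X ^ Q ^ k
  have hdeg : P.natDegree < Fintype.card K := by
    rw [Fintype.card_eq_nat_card, hK]
    refine (natDegree_sum_le_of_forall_le _ _ (n := Q ^ (m - 1)) fun j hj => ?_).trans_lt ?_
    · refine (natDegree_C_mul_X_pow_le _ _).trans (Nat.pow_le_pow_right (by omega) ?_)
      have := mem_range.1 hj
      omega
    · exact Nat.pow_lt_pow_right hQ (by omega)
  have hP : P = 0 := eq_zero_of_natDegree_lt_card_of_eval_eq_zero P Function.injective_id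
    (fun β => by simpa [P, eval_finsetSum] using h β) hdeg
  have hcoeff : P.coeff (Q ^ k) = c k := by
    rw [finsetSum_coeff, sum_eq_single k]
    · simp
    · intro j _ hjk
      rw [coeff_C_mul_X_pow, if_neg (fun he => hjk (Nat.pow_right_injective hQ he).symm)]
    · intro hk'
      exact absurd (mem_range.2 hk) hk'
  rw [← hcoeff, hP, coeff_zero]

theorem IsPrimitiveRoot.sum_pow_mul_eq_zero {α : K} (hα : IsPrimitiveRoot α n) {j : ℕ}
    (h : ¬ n ∣ j) : ∑ i : Fin n, α ^ ((i : ℕ) * j) = 0 := by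
  have hne : α ^ j ≠ 1 := fun h1 => h ((hα.pow_eq_one_iff_dvd j).1 h1)
  have hpow : (α ^ j) ^ n = 1 := by rw [← pow_mul, mul_comm, pow_mul, hα.pow_eq_one, one_pow]
  simp only [mul_comm _ j, pow_mul]
  rw [Fin.sum_univ_eq_sum_range (fun i => (α ^ j) ^ i), geom_sum_eq hne, hpow, sub_self, zero_div]

theorem sum_pow_mul_of_dvd {α : K} (hα : α ^ n = 1) {j : ℕ} (h : n ∣ j) :
    ∑ i : Fin n, α ^ ((i : ℕ) * j) = n := by
  obtain ⟨t, rfl⟩ := h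
  simp [mul_left_comm _ n, pow_mul, hα]

def codewordEval (α : K) (c : Fin n → F) (z : ℕ) : K :=
  ∑ i, algebraMap F K (c i) * α ^ ((i : ℕ) * z)

theorem mem_cyclicCode_iff {α : K} {Z : Finset ℕ} {c : Fin n → F} :
    c ∈ cyclicCode F n α Z ↔ ∀ z ∈ Z, codewordEval α c z = 0 :=
  Iff.rfl

theorem codewordEval_map {E : Type*} [Field E] [Algebra F E] (f : K →ₐ[F] E) (α : K)
    (c : Fin n → F) (z : ℕ) : codewordEval (f α) c z = f (codewordEval α c z) := by
  simp [codewordEval, map_sum]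

theorem cyclicCode_map {E : Type*} [Field E] [Algebra F E] (f : K →ₐ[F] E) (α : K)
    (Z : Finset ℕ) : cyclicCode F n (f α) Z = cyclicCode F n α Z := by
  ext c
  simp only [mem_cyclicCode_iff, codewordEval_map, map_eq_zero_iff f f.injective]

theorem codewordEval_pow_expChar (p s : ℕ) [ExpChar K p] (α : K) (c : Fin n → F) (z : ℕ) :
    codewordEval α c z ^ p ^ s = codewordEval α (c ^ p ^ s) (z * p ^ s) := by
  simp only [codewordEval, sum_pow_char_pow, mul_pow, Pi.pow_apply, map_pow, ← pow_mul, mul_assoc]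

variable (F) in
noncomputable def traceWord (α : K) (n w : ℕ) (β : K) : Fin n → F :=
  fun i => Algebra.trace F K (β * α ^ ((i : ℕ) * w))

theorem sum_mul_traceWord (α : K) (c : Fin n → F) (w : ℕ) (β : K) :
    ∑ i, c i * traceWord F α n w β i = Algebra.trace F K (β * codewordEval α c w) := by
  simp only [codewordEval, mul_sum, map_sum]
  refine sum_congr rfl fun i _ => ?_
  rw [traceWord, ← smul_eq_mul, ← LinearMap.map_smul, Algebra.smul_def]
  ring_nf

theorem codewordEval_traceWord [Fintype F] [Finite K] (α : K) (w e : ℕ) (β : K) :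
    codewordEval α (traceWord F α n w β) e =
      ∑ k ∈ range (Module.finrank F K),
        β ^ (Fintype.card F ^ k) * ∑ i : Fin n, α ^ ((i : ℕ) * (w * Fintype.card F ^ k + e)) := by
  simp only [codewordEval, traceWord, FiniteField.algebraMap_trace_eq_sum_pow,
    Nat.card_eq_fintype_card, sum_mul, mul_sum]
  rw [sum_comm]
  refine sum_congr rfl fun k _ => sum_congr rfl fun i _ => ?_
  rw [mul_pow, ← pow_mul, mul_assoc, ← pow_add]
  ring_nf

theorem hermDualSet_subset_cyclicCode [Fintype F] [Finite K] (p s : ℕ) [ExpChar K p] {α : K}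
    (hα : IsPrimitiveRoot α n) {Z : Finset ℕ} (hZn : ∀ z ∈ Z, z < n)
    (hZF : ∀ z ∈ Z, z * Fintype.card F % n ∈ Z)
    (hZ : Disjoint Z (Z.image fun z => (n - p ^ s * z % n) % n)) :
    hermDualSet (p ^ s) (cyclicCode F n α Z : Set (Fin n → F)) ⊆ cyclicCode F n α Z := by
  intro y hy z hz
  suffices codewordEval α (y ^ p ^ s) (z * p ^ s) = 0 by
    rw [← codewordEval_pow_expChar] at this
    exact pow_eq_zero_iff (expChar_pow_pos K p s).ne' |>.1 this
  refine (traceForm_nondegenerate F K).1 _ fun β => ?_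
  have hx : traceWord F α n (z * p ^ s) β ∈ cyclicCode F n α Z := by
    refine mem_cyclicCode_iff.2 fun z' hz' => ?_
    rw [codewordEval_traceWord]
    refine sum_eq_zero fun k _ => ?_
    rw [hα.sum_pow_mul_eq_zero, mul_zero]
    intro hdvd
    have hz'eq : (n - p ^ s * (z * Fintype.card F ^ k % n) % n) % n = z' := by
      refine (Nat.sub_mod_mod_eq_iff_dvd (hZn z' hz')).2 ?_
      refine (((Nat.mod_modEq _ n).mul_left (p ^ s)).add_right z').dvd_iff dvd_rfl |>.2 ?_
      convert hdvd using 2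
      ring
    exact disjoint_left.1 hZ hz' (mem_image.2 ⟨_, mul_pow_mod_mem hZn hZF hz k, hz'eq⟩)
  rw [Algebra.traceForm_apply, mul_comm, ← sum_mul_traceWord]
  exact hy _ hx

theorem disjoint_of_hermDualSet_subset [Fintype F] [Finite K] (p s : ℕ) [ExpChar K p]
    (hF : Fintype.card F = (p ^ s) ^ 2) {α : K} (hα : IsPrimitiveRoot α n) {Z : Finset ℕ}
    (hZn : ∀ z ∈ Z, z < n)
    (hsub : hermDualSet (p ^ s) (cyclicCode F n α Z : Set (Fin n → F)) ⊆ cyclicCode F n α Z) :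
    Disjoint Z (Z.image fun z => (n - p ^ s * z % n) % n) := by
  refine disjoint_left.2 fun a ha ha' => ?_
  obtain ⟨z, hz, rfl⟩ := mem_image.1 ha'
  have : NeZero n := ⟨by have := hZn _ ha; omega⟩
  have hq : p ^ s ≠ 0 := (expChar_pow_pos K p s).ne'
  set a := (n - p ^ s * z % n) % n
  have hyq : ∀ β, (traceWord F α n a β ^ p ^ s) ^ p ^ s = traceWord F α n a β := fun β => by
    ext i
    rw [Pi.pow_apply, Pi.pow_apply, ← pow_mul, ← sq, ← hF, FiniteField.pow_card]
  have hyD : ∀ β, traceWord F α n a β ^ p ^ s ∈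
      hermDualSet (p ^ s) (cyclicCode F n α Z : Set (Fin n → F)) := fun β x hx => by
    simp only [Pi.pow_apply, ← pow_mul, ← sq, ← hF, FiniteField.pow_card, mul_comm _ (x _)]
    rw [sum_mul_traceWord, mem_cyclicCode_iff.1 hx a ha, mul_zero, map_zero]
  have hcoeff : ∀ β : K, ∑ k ∈ range (Module.finrank F K),
      (∑ i : Fin n, α ^ ((i : ℕ) * (a * Fintype.card F ^ k + z * p ^ s))) * β ^ Fintype.card F ^ k
        = 0 := fun β => by
    have h0 := congrArg (· ^ p ^ s) (mem_cyclicCode_iff.1 (hsub (hyD β)) z hz)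
    simp only [codewordEval_pow_expChar, hyq, codewordEval_traceWord, zero_pow hq] at h0
    simpa only [mul_comm] using h0
  have hK : Nat.card K = Fintype.card F ^ Module.finrank F K := by
    rw [Module.natCard_eq_pow_finrank (K := F), Nat.card_eq_fintype_card]
  have h0 := eq_zero_of_forall_sum_mul_pow_pow_eq_zero Fintype.one_lt_card hK hcoeff
    Module.finrank_pos
  have hdvd : n ∣ a + z * p ^ s := by
    rw [mul_comm, add_comm]
    exact (Nat.sub_mod_mod_eq_iff_dvd (hZn _ ha)).1 rfl
  rw [pow_zero, mul_one, sum_pow_mul_of_dvd hα.pow_eq_one hdvd] at h0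
  exact hα.neZero'.out h0

end

open IntermediateField in
theorem cyclic_contains_hermitian_dual_iff_general
    (q n : ℕ) (hq : IsPrimePow q) (hn : 0 < n)
    (F E : Type*) [Field F] [Fintype F] [Field E] [Algebra F E]
    (hF : Fintype.card F = q ^ 2)
    (α : E) (hα : IsPrimitiveRoot α n)
    (Z : Finset ℕ) (hZn : ∀ z ∈ Z, z < n) (hZq : ∀ z ∈ Z, z * q ^ 2 % n ∈ Z) :
    hermDualSet q (cyclicCode F n α Z : Set (Fin n → F)) ⊆
        (cyclicCode F n α Z : Set (Fin n → F)) ↔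
      Z ∩ Z.image (fun z => (n - (q * z) % n) % n) = ∅ := by
  obtain ⟨p, s, hp, -, rfl⟩ := hq
  have : Fact p.Prime := ⟨Nat.prime_iff.2 hp⟩
  have : CharP F p := charP_of_card_eq_prime_pow (by rw [hF, ← pow_mul])
  have hint : IsIntegral F α := .of_pow hn (by rw [hα.pow_eq_one]; exact isIntegral_one)
  have : FiniteDimensional F F⟮α⟯ := adjoin.finiteDimensional hint
  have : Finite F⟮α⟯ := Module.finite_of_finite F
  have : CharP F⟮α⟯ p := charP_of_injective_algebraMap (algebraMap F F⟮α⟯).injective p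
  have : ExpChar F⟮α⟯ p := .prime Fact.out
  have hα' : IsPrimitiveRoot (AdjoinSimple.gen F α) n :=
    .of_map_of_injective (f := F⟮α⟯.val) hα F⟮α⟯.val.injective
  have hcode : cyclicCode F n α Z = cyclicCode F n (AdjoinSimple.gen F α) Z :=
    cyclicCode_map F⟮α⟯.val (AdjoinSimple.gen F α) Z
  rw [hcode, ← disjoint_iff_inter_eq_empty]
  exact ⟨disjoint_of_hermDualSet_subset p s hF hα' hZn,
    hermDualSet_subset_cyclicCode p s hα' hZn (by rwa [hF])⟩

/-- A cyclic code of length `n` over `F_{q^2}`, `gcd(n,q) = 1`, with defining set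
`Z` (closed under multiplication by `q^2` mod `n`) contains its Hermitian dual
code iff `Z ∩ Z^{-q} = ∅`, where `Z^{-q} = {-qz mod n : z ∈ Z}`. -/
theorem cyclic_contains_hermitian_dual_iff
    (q n : ℕ) (hq : IsPrimePow q) (hn : 0 < n) (hgcd : Nat.gcd n q = 1)
    (F E : Type*) [Field F] [Fintype F] [Field E] [Algebra F E]
    (hF : Fintype.card F = q ^ 2)
    (α : E) (hα : IsPrimitiveRoot α n)
    (Z : Finset ℕ) (hZn : ∀ z ∈ Z, z < n) (hZq : ∀ z ∈ Z, z * q ^ 2 % n ∈ Z) :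
    hermDualSet q (cyclicCode F n α Z : Set (Fin n → F)) ⊆
        (cyclicCode F n α Z : Set (Fin n → F)) ↔
      Z ∩ Z.image (fun z => (n - (q * z) % n) % n) = ∅ :=
  cyclic_contains_hermitian_dual_iff_general q n hq hn F E hF α hα Z hZn hZq
end

section
/- Let q be a prime power, m a positive integer, and n = q^m − 1. For an integer δ with 2 ≤ δ ≤ q^{⌈m/2⌉} + 1, the union Z = C_1 ∪ C_2 ∪ ⋯ ∪ C_{δ−1} of the q-ary cyclotomic cosets modulo n of 1, 2, …, δ−1 has cardinality |Z| = m·⌈(δ−1)(1 − 1/q)⌉. -/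
/-- The `q`-ary cyclotomic coset of `x` modulo `n`: `{x q^k mod n : k ≥ 0}`. -/
def cycCoset (q n x : ℕ) : Set ℕ := {y | ∃ k : ℕ, y = x * q ^ k % n}

/-!
Since `q^m ≡ 1 (mod n)`, every coset is `C_x = {x q^k mod n : k < m}` and `C_{qx} = C_x`, so
`Z` is the union of the cosets of the `(δ-1) - ⌊(δ-1)/q⌋` integers `x ≤ δ - 1` prime to `q`.
These satisfy `x < q^s` with `s = ⌈m/2⌉`. If `x q^k ≡ y (mod n)` for two of them and
`0 < k < m`, then either `x q^k < n` or `y q^(m-k) < n` (as `s + s - 1 ≤ m`), forcing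
`y = x q^k` or `x = y q^(m-k)`, against `q ∤ x, y`. Hence these cosets are pairwise disjoint
and each has exactly `m` elements.
-/

lemma Nat.ModEq.eq_of_pos_of_le {n a b : ℕ} (h : a ≡ b [MOD n]) (ha0 : 0 < a) (ha : a ≤ n)
    (hb0 : 0 < b) (hb : b ≤ n) : a = b := by
  have h' : a - 1 ≡ b - 1 [MOD n] :=
    Nat.ModEq.add_right_cancel' 1 (by rwa [Nat.sub_add_cancel ha0, Nat.sub_add_cancel hb0])
  have := h'.eq_of_lt_of_lt (by omega) (by omega)
  omega

section PowModEqOne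

variable {q n m : ℕ}

lemma mul_pow_modEq_mul_pow_mod (h : q ^ m ≡ 1 [MOD n]) (x k : ℕ) :
    x * q ^ k ≡ x * q ^ (k % m) [MOD n] := by
  have hk : x * q ^ k = x * q ^ (k % m) * (q ^ m) ^ (k / m) := by
    rw [mul_assoc, ← pow_mul, ← pow_add, Nat.mod_add_div]
  simpa [hk] using (Nat.ModEq.refl (x * q ^ (k % m))).mul (h.pow (k / m))

lemma cycCoset_eq_image_Iio (h : q ^ m ≡ 1 [MOD n]) (hm : 0 < m) (x : ℕ) :
    cycCoset q n x = (fun k ↦ x * q ^ k % n) '' Set.Iio m := by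
  ext y
  constructor
  · rintro ⟨k, rfl⟩
    exact ⟨k % m, Nat.mod_lt _ hm, (mul_pow_modEq_mul_pow_mod h x k).symm⟩
  · rintro ⟨k, -, rfl⟩
    exact ⟨k, rfl⟩

lemma cycCoset_mul_pow (h : q ^ m ≡ 1 [MOD n]) (hm : 0 < m) (x e : ℕ) :
    cycCoset q n (x * q ^ e) = cycCoset q n x := by
  ext y
  constructor
  · rintro ⟨k, rfl⟩
    exact ⟨e + k, by rw [mul_assoc, ← pow_add]⟩
  · rintro ⟨k, rfl⟩
    refine ⟨k + (m - 1) * e, ?_⟩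
    have hexp : x * q ^ e * q ^ (k + (m - 1) * e) = x * q ^ k * (q ^ m) ^ e := by
      obtain ⟨m, rfl⟩ := Nat.exists_eq_add_one_of_ne_zero hm.ne'
      rw [Nat.add_sub_cancel]
      ring
    show x * q ^ k ≡ x * q ^ e * q ^ (k + (m - 1) * e) [MOD n]
    rw [hexp]
    simpa using (Nat.ModEq.refl (x * q ^ k)).mul (h.pow e).symm

lemma biUnion_Icc_cycCoset_eq (h : q ^ m ≡ 1 [MOD n]) (hm : 0 < m) (hq : q ≠ 1) (N : ℕ) :
    ⋃ x ∈ Set.Icc 1 N, cycCoset q n x =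
      ⋃ x ∈ (({x ∈ Finset.Icc 1 N | ¬ q ∣ x} : Finset ℕ) : Set ℕ), cycCoset q n x := by
  refine subset_antisymm ?_ (Set.biUnion_subset_biUnion_left fun x hx ↦ by simp_all)
  refine Set.iUnion₂_subset fun x hx ↦ ?_
  obtain ⟨hx0, hxN⟩ := hx
  obtain ⟨e, x', hx'q, rfl⟩ := Nat.exists_eq_pow_mul_and_not_dvd (by omega : x ≠ 0) q hq
  have hx' : x' ≠ 0 := by rintro rfl; simp at hx0
  have hqe : 0 < q ^ e := Nat.pos_of_ne_zero fun h0 ↦ by simp [h0] at hx0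
  rw [mul_comm, cycCoset_mul_pow h hm]
  refine Set.subset_biUnion_of_mem (u := fun x ↦ cycCoset q n x) ?_
  simp only [Finset.coe_filter, Finset.mem_Icc, Set.mem_ofPred_eq]
  exact ⟨⟨by omega, le_trans (Nat.le_mul_of_pos_left _ hqe) hxN⟩, hx'q⟩

lemma ncard_biUnion_cycCoset (h : q ^ m ≡ 1 [MOD n]) (hm : 0 < m) (R : Finset ℕ)
    (hR : ∀ x ∈ R, ∀ y ∈ R, ∀ i < m, ∀ j < m, x * q ^ i ≡ y * q ^ j [MOD n] → x = y ∧ i = j) :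
    (⋃ x ∈ (R : Set ℕ), cycCoset q n x).ncard = R.card * m := by
  have hU : ⋃ x ∈ (R : Set ℕ), cycCoset q n x =
      (fun p : ℕ × ℕ ↦ p.1 * q ^ p.2 % n) '' ↑(R ×ˢ Finset.range m) := by
    simp_rw [cycCoset_eq_image_Iio h hm]
    ext
    simp [and_assoc]
  rw [hU, Set.InjOn.ncard_image, Set.ncard_coe_finset, Finset.card_product, Finset.card_range]
  rintro ⟨x, i⟩ hxi ⟨y, j⟩ hyj hxy
  simp only [Finset.coe_product, Finset.coe_range, Set.mem_prod, Finset.mem_coe, Set.mem_Iio]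
    at hxi hyj
  obtain ⟨rfl, rfl⟩ := hR x hxi.1 y hyj.1 i hxi.2 j hyj.2 hxy
  rfl

end PowModEqOne

lemma card_filter_not_dvd_Icc (q N : ℕ) :
    ({x ∈ Finset.Icc 1 N | ¬ q ∣ x} : Finset ℕ).card = N - N / q := by
  have hIcc : Finset.Icc 1 N = Finset.Ioc 0 N := Finset.Icc_succ_left_eq_Ioc 0 N
  have h := Finset.card_filter_add_card_filter_not (s := Finset.Ioc 0 N) (q ∣ ·)
  rw [Nat.Ioc_filter_dvd_card_eq_div, Nat.card_Ioc] at h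
  rw [hIcc]
  omega

section Cyclotomic

variable {q m s x y k : ℕ}

lemma pow_modEq_one_sub_one (hq : 0 < q) : q ^ m ≡ 1 [MOD q ^ m - 1] :=
  Nat.modEq_sub (Nat.one_le_pow _ _ hq)

lemma not_mul_pow_modEq_of_add_le (hq : 2 ≤ q) (hk : 0 < k) (hks : k + s ≤ m) (hx : x < q ^ s)
    (hy : y < q ^ s) (hyq : ¬ q ∣ y) : ¬ x * q ^ k ≡ y [MOD q ^ m - 1] := by
  intro h
  have hqk : q ≤ q ^ k := Nat.le_self_pow hk.ne' q
  have hsk : q ^ s * q ^ k ≤ q ^ m := by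
    rw [← pow_add]
    exact Nat.pow_le_pow_right (by omega) (by omega)
  have hxk : (x + 1) * q ^ k ≤ q ^ s * q ^ k := Nat.mul_le_mul_right _ hx
  have hyk : (y + 1) * q ≤ q ^ s * q ^ k := Nat.mul_le_mul hy hqk
  have hyq2 : 2 * y ≤ y * q := by nlinarith
  rw [add_mul, one_mul] at hxk hyk
  have hxy := h.eq_of_lt_of_lt (by omega) (by omega)
  exact hyq (hxy ▸ (dvd_pow_self q hk.ne').mul_left x)

lemma not_mul_pow_modEq (hq : 2 ≤ q) (hs : 2 * s ≤ m + 1) (hx : x < q ^ s) (hxq : ¬ q ∣ x)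
    (hy : y < q ^ s) (hyq : ¬ q ∣ y) (hk0 : 0 < k) (hkm : k < m) :
    ¬ x * q ^ k ≡ y [MOD q ^ m - 1] := by
  rcases le_or_gt (k + s) m with hks | hks
  · exact not_mul_pow_modEq_of_add_le hq hk0 hks hx hy hyq
  · intro h
    refine not_mul_pow_modEq_of_add_le hq (m := m) (s := s) (k := m - k) (by omega) (by omega)
      hy hx hxq ?_
    calc y * q ^ (m - k) ≡ x * q ^ k * q ^ (m - k) [MOD q ^ m - 1] := (h.mul_right _).symm
      _ = x * q ^ m := by rw [mul_assoc, ← pow_add, Nat.add_sub_cancel' hkm.le]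
      _ ≡ x * 1 [MOD q ^ m - 1] := (pow_modEq_one_sub_one (by omega)).mul_left _
      _ = x := mul_one x

lemma eq_and_eq_of_mul_pow_modEq_mul_pow (hq : 2 ≤ q) (hs : 2 * s ≤ m + 1)
    (hx0 : 0 < x) (hx : x < q ^ s) (hxq : ¬ q ∣ x) (hy0 : 0 < y) (hy : y < q ^ s) (hyq : ¬ q ∣ y)
    {i j : ℕ} (hi : i < m) (hj : j < m) (h : x * q ^ i ≡ y * q ^ j [MOD q ^ m - 1]) :
    x = y ∧ i = j := by
  wlog hij : i ≤ j generalizing x y i j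
  · exact (this hy0 hy hyq hx0 hx hxq hj hi h.symm (by omega)).imp Eq.symm Eq.symm
  have hqm : q ^ m ≡ 1 [MOD q ^ m - 1] := pow_modEq_one_sub_one (by omega)
  have hxy : x * q ^ (i + (m - j)) ≡ y [MOD q ^ m - 1] := calc
    x * q ^ (i + (m - j)) = x * q ^ i * q ^ (m - j) := by rw [pow_add, mul_assoc]
    _ ≡ y * q ^ j * q ^ (m - j) [MOD q ^ m - 1] := h.mul_right _
    _ = y * q ^ m := by rw [mul_assoc, ← pow_add, Nat.add_sub_cancel' hj.le]
    _ ≡ y * 1 [MOD q ^ m - 1] := hqm.mul_left _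
    _ = y := mul_one y
  obtain hij | rfl := hij.lt_or_eq
  · exact absurd hxy (not_mul_pow_modEq hq hs hx hxq hy hyq (by omega) (by omega))
  · rw [Nat.add_sub_cancel' hi.le] at hxy
    have hsm : q ^ s ≤ q ^ m := Nat.pow_le_pow_right (by omega) (by omega)
    have hxx : x ≡ y [MOD q ^ m - 1] := by simpa using (hqm.mul_left x).symm.trans hxy
    exact ⟨hxx.eq_of_pos_of_le hx0 (by omega) hy0 (by omega), rfl⟩

end Cyclotomic

theorem card_union_cycCosets_general
    (q m : ℕ) (hq : IsPrimePow q) (hm : 0 < m)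
    (δ : ℕ) (hδ2 : δ ≤ q ^ ((m + 1) / 2) + 1) :
    (⋃ x ∈ Set.Icc 1 (δ - 1), cycCoset q (q ^ m - 1) x).ncard =
      m * ((δ - 1) - (δ - 1) / q) := by
  have hq2 : 2 ≤ q := hq.two_le
  have hqm : q ^ m ≡ 1 [MOD q ^ m - 1] := pow_modEq_one_sub_one (by omega)
  rw [biUnion_Icc_cycCoset_eq hqm hm (by omega), ncard_biUnion_cycCoset hqm hm,
    card_filter_not_dvd_Icc, mul_comm]
  have hleader : ∀ x ∈ ({x ∈ Finset.Icc 1 (δ - 1) | ¬ q ∣ x} : Finset ℕ),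
      0 < x ∧ x < q ^ ((m + 1) / 2) ∧ ¬ q ∣ x := by
    intro x hx
    simp only [Finset.mem_filter, Finset.mem_Icc] at hx
    have hne : x ≠ q ^ ((m + 1) / 2) := fun hxs ↦ hx.2 (hxs ▸ dvd_pow_self q (by omega))
    exact ⟨by omega, by omega, hx.2⟩
  intro x hx y hy i hi j hj h
  obtain ⟨hx0, hx, hxq⟩ := hleader x hx
  obtain ⟨hy0, hy, hyq⟩ := hleader y hy
  exact eq_and_eq_of_mul_pow_modEq_mul_pow hq2 (by omega) hx0 hx hxq hy0 hy hyq hi hj h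

/-- For `n = q^m - 1` and `2 ≤ δ ≤ q^⌈m/2⌉ + 1`, the union
`Z = C_1 ∪ ⋯ ∪ C_{δ-1}` of `q`-ary cyclotomic cosets has cardinality
`m·⌈(δ-1)(1-1/q)⌉`, where `⌈(δ-1)(1-1/q)⌉ = (δ-1) - ⌊(δ-1)/q⌋`. -/
theorem card_union_cycCosets
    (q m : ℕ) (hq : IsPrimePow q) (hm : 0 < m)
    (δ : ℕ) (hδ1 : 2 ≤ δ) (hδ2 : δ ≤ q ^ ((m + 1) / 2) + 1) :
    (⋃ x ∈ Set.Icc 1 (δ - 1), cycCoset q (q ^ m - 1) x).ncard =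
      m * ((δ - 1) - (δ - 1) / q) :=
  card_union_cycCosets_general q m hq hm δ hδ2
end

section
/- Let q be a prime power, m a positive integer, and n = q^m − 1. Let α be a primitive element of F_{q^m}, and for an integer δ with 2 ≤ δ ≤ q^{⌈m/2⌉} + 1 let C be the primitive, narrow-sense BCH code of designed distance δ, i.e. C = {c ∈ F_q^n : Σ_{i=0}^{n−1} c_i α^{ij} = 0 for all 1 ≤ j ≤ δ−1}. If Σ_{i=0}^{⌊(δ+1)/2⌋} binom(q^m − 1, i)(q−1)^i > q^{m·⌈(δ−1)(1−1/q)⌉}, then the minimum distance d of C satisfies d = δ or d = δ + 1; if, furthermore, δ ≡ 0 (mod q), then d = δ + 1. -/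
/-- The minimum distance of a code: the least Hamming weight of a nonzero
codeword. -/
noncomputable def minDist {F : Type*} [Field F] [DecidableEq F] {n : ℕ}
    (C : Set (Fin n → F)) : ℕ :=
  sInf {w | ∃ c ∈ C, c ≠ 0 ∧ hammingNorm c = w}

/-!
The BCH bound (a Vandermonde determinant) gives `d ≥ δ`. Over `F_q`, the check at `q j` is the
`q`-th power of the check at `j` (Frobenius). Hence `d ≥ δ + 1` when `q ∣ δ`, and the checks at
multiples of `q` are redundant: the code is the kernel of the `(δ - 1) - ⌊(δ - 1) / q⌋` remaining
checks, each with values in `F_{q^m}`, so it has at least `q ^ (n - m ((δ - 1) - ⌊(δ - 1) / q⌋))`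
words. If every nonzero codeword had weight `≥ δ + 2`, the Hamming balls of radius `⌊(δ + 1) / 2⌋`
around the codewords would be disjoint, whereas by this size bound and the hypothesis their total
volume exceeds `q ^ n`.
-/

open Finset Fintype

section Hamming

variable {ι β : Type*} [Fintype ι] [DecidableEq ι] [Fintype β] [DecidableEq β]

def hammingBall (x : ι → β) (t : ℕ) : Finset (ι → β) := {y | hammingDist y x ≤ t}

theorem card_filter_filter_ne_eq (x : ι → β) (s : Finset ι) :
    #{y : ι → β | ({k | y k ≠ x k} : Finset ι) = s} = (card β - 1) ^ #s := by
  have hpi : ({y : ι → β | ({k | y k ≠ x k} : Finset ι) = s} : Finset (ι → β)) =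
      piFinset fun k => if k ∈ s then univ.erase (x k) else {x k} := by
    ext y
    simp only [mem_filter, mem_univ, true_and, Fintype.mem_piFinset, Finset.ext_iff]
    refine forall_congr' fun k => ?_
    split_ifs with hk <;> simp [hk]
  rw [hpi, card_piFinset]
  simp [apply_ite, Finset.prod_ite_mem]

theorem card_filter_hammingDist_eq (x : ι → β) (i : ℕ) :
    #{y : ι → β | hammingDist y x = i} = (card ι).choose i * (card β - 1) ^ i := by
  rw [card_eq_sum_card_fiberwise (s := {y : ι → β | hammingDist y x = i})
    (f := fun y : ι → β => ({k | y k ≠ x k} : Finset ι)) (t := powersetCard i univ)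
    fun y hy => mem_powersetCard.mpr ⟨subset_univ _, (mem_filter.mp hy).2⟩]
  have hfiber : ∀ s ∈ powersetCard i (univ : Finset ι),
      #{y ∈ {y : ι → β | hammingDist y x = i} | ({k | y k ≠ x k} : Finset ι) = s} =
        (card β - 1) ^ i := by
    intro s hs
    rw [filter_filter, ← (mem_powersetCard.mp hs).2, ← card_filter_filter_ne_eq x s]
    congr 2 with y
    exact and_iff_right_of_imp fun hy => by rw [← hy]; rfl
  rw [sum_congr rfl hfiber, sum_const, card_powersetCard, card_univ, smul_eq_mul]

theorem card_hammingBall (x : ι → β) (t : ℕ) :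
    #(hammingBall x t) = ∑ i ∈ range (t + 1), (card ι).choose i * (card β - 1) ^ i := by
  rw [hammingBall, card_eq_sum_card_fiberwise (f := (hammingDist · x)) (t := range (t + 1))
    fun y hy => by simpa [Nat.lt_succ_iff] using hy]
  refine sum_congr rfl fun i hi => ?_
  rw [filter_filter, ← card_filter_hammingDist_eq x i]
  congr 2 with y
  exact and_iff_right_of_imp fun hy => hy ▸ Nat.lt_succ_iff.mp (mem_range.mp hi)

theorem card_mul_sum_choose_le_of_two_mul_lt_hammingDist (C : Finset (ι → β)) (t : ℕ)
    (hC : ∀ x ∈ C, ∀ y ∈ C, x ≠ y → 2 * t < hammingDist x y) :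
    #C * ∑ i ∈ range (t + 1), (card ι).choose i * (card β - 1) ^ i ≤ card β ^ card ι := by
  have hdisj : (C : Set (ι → β)).PairwiseDisjoint (hammingBall · t) := by
    intro x hx y hy hxy
    refine disjoint_left.mpr fun z hzx hzy => ?_
    simp only [hammingBall, mem_filter, mem_univ, true_and] at hzx hzy
    have := hammingDist_triangle x z y
    rw [hammingDist_comm x z] at this
    exact absurd (hC x hx y hy hxy) (by omega)
  calc #C * ∑ i ∈ range (t + 1), (card ι).choose i * (card β - 1) ^ i
      = ∑ x ∈ C, #(hammingBall x t) := by simp only [card_hammingBall, sum_const, smul_eq_mul]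
    _ = #(C.biUnion (hammingBall · t)) := (card_biUnion hdisj).symm
    _ ≤ card β ^ card ι := (card_le_univ _).trans_eq (by simp)

theorem AddSubgroup.exists_mem_ne_zero_hammingNorm_le [AddGroup β] (C : AddSubgroup (ι → β))
    (t : ℕ) (hC : card β ^ card ι < Nat.card C *
      ∑ i ∈ range (t + 1), (card ι).choose i * (card β - 1) ^ i) :
    ∃ c ∈ C, c ≠ 0 ∧ hammingNorm c ≤ 2 * t := by
  classical
  by_contra! hfar
  have hpack := card_mul_sum_choose_le_of_two_mul_lt_hammingDist (C : Set (ι → β)).toFinset t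
    fun x hx y hy hxy => by
      rw [hammingDist_eq_hammingNorm]
      exact hfar _ (add_mem (neg_mem (by simpa using hx)) (by simpa using hy))
        (neg_add_eq_zero.not.mpr hxy)
  rw [← Nat.card_eq_card_toFinset] at hpack
  exact hC.not_ge hpack

end Hamming

theorem AddMonoidHom.card_le_card_ker_mul_card {G M : Type*} [AddGroup G] [AddGroup M] [Finite M]
    (f : G →+ M) : Nat.card G ≤ Nat.card f.ker * Nat.card M := by
  calc Nat.card G = Nat.card f.ker * Nat.card f.range := by
        rw [← AddSubgroup.index_ker, AddSubgroup.card_mul_index]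
    _ ≤ Nat.card f.ker * Nat.card M := Nat.mul_le_mul_left _ (AddSubgroup.card_le_card_addGroup _)

theorem eq_zero_of_forall_sum_mul_pow_succ_eq_zero {ι K : Type*} [Fintype ι] [CommRing K]
    [IsDomain K] {x u : ι → K} (hx : Function.Injective x) (hx0 : ∀ k, x k ≠ 0)
    (h : ∀ j < card ι, ∑ k, u k * x k ^ (j + 1) = 0) : u = 0 := by
  let e := equivFin ι
  have hux : (fun i => u (e.symm i) * x (e.symm i)) = 0 :=
    Matrix.eq_zero_of_forall_pow_sum_mul_pow_eq_zero (hx.comp e.symm.injective) fun j => by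
      rw [← h j j.2, ← e.symm.sum_comp]
      simp only [Function.comp_apply, mul_assoc, pow_succ']
  funext k
  simpa [hx0 k] using congrFun hux (e k)

section Syndrome

variable {F E : Type*} [Field F] [CommRing E] [Algebra F E] {n : ℕ}

def syndrome (α : E) (c : Fin n → F) (j : ℕ) : E :=
  ∑ i : Fin n, algebraMap F E (c i) * α ^ ((i : ℕ) * j)

theorem syndrome_add (α : E) (a b : Fin n → F) (j : ℕ) :
    syndrome α (a + b) j = syndrome α a j + syndrome α b j := by
  simp only [syndrome, Pi.add_apply, map_add, add_mul, sum_add_distrib]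

theorem syndrome_card_mul [Fintype F] (α : E) (c : Fin n → F) (j : ℕ) :
    syndrome α c (card F * j) = syndrome α c j ^ card F := by
  rw [← FiniteField.frobeniusAlgHom_apply, syndrome, syndrome, map_sum]
  refine sum_congr rfl fun i _ => ?_
  rw [map_mul, AlgHom.commutes, map_pow, FiniteField.frobeniusAlgHom_apply, ← pow_mul,
    mul_left_comm]

theorem lt_hammingNorm_of_syndrome_eq_zero [DecidableEq F] [IsDomain E] {α : E}
    (hα : orderOf α = n) {c : Fin n → F} (hc : c ≠ 0) {D : ℕ}
    (h : ∀ j, 1 ≤ j → j ≤ D → syndrome α c j = 0) : D < hammingNorm c := by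
  classical
  by_contra! hD
  obtain ⟨i₀, hi₀⟩ := Function.ne_iff.mp hc
  let S : Finset (Fin n) := {i | c i ≠ 0}
  have hα0 : α ≠ 0 := (orderOf_pos_iff.mp (hα ▸ i₀.pos)).isUnit.ne_zero
  have hpow_inj : Function.Injective fun i : S => α ^ (i : ℕ) := fun a b hab =>
    Subtype.ext <| Fin.ext <| pow_injOn_Iio_orderOf (by simp [hα]) (by simp [hα]) hab
  have hu := eq_zero_of_forall_sum_mul_pow_succ_eq_zero (u := fun i : S => algebraMap F E (c i))
    hpow_inj (fun _ => pow_ne_zero _ hα0) fun j hj => by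
      have hS : Fintype.card S = hammingNorm c := card_coe S
      rw [← h (j + 1) le_add_self (by omega), syndrome, ← sum_filter_of_ne (p := (c · ≠ 0))
        fun i _ hi => by contrapose! hi; simp [hi]]
      simp only [← pow_mul]
      exact sum_coe_sort S fun i => algebraMap F E (c i) * α ^ ((i : ℕ) * (j + 1))
  exact hi₀ <| (map_eq_zero (algebraMap F E)).mp <| congrFun hu ⟨i₀, by simpa [S] using hi₀⟩

end Syndrome

section BCHCode

variable {F E : Type*} [Field F] [Field E] [Algebra F E] {n : ℕ}

theorem mem_bchCode_iff {α : E} {δ : ℕ} {c : Fin n → F} :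
    c ∈ bchCode F n α δ ↔ ∀ j, 1 ≤ j → j ≤ δ - 1 → syndrome α c j = 0 :=
  Iff.rfl

theorem mem_bchCode_iff_of_not_dvd [Fintype F] {α : E} {δ : ℕ} {c : Fin n → F} :
    c ∈ bchCode F n α δ ↔
      ∀ j ∈ Ioc 0 (δ - 1), ¬ card F ∣ j → syndrome α c j = 0 := by
  refine ⟨fun hc j hj _ => hc j (mem_Ioc.mp hj).1 (mem_Ioc.mp hj).2, fun h => ?_⟩
  rw [mem_bchCode_iff]
  intro j
  induction j using Nat.strong_induction_on with
  | _ j ih =>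
    intro hj1 hjδ
    by_cases hdvd : card F ∣ j
    · obtain ⟨k, rfl⟩ := hdvd
      have hk : 0 < k := Nat.pos_of_mul_pos_left hj1
      have hkj : k < card F * k := lt_mul_left hk Fintype.one_lt_card
      rw [syndrome_card_mul, ih k hkj hk (by omega), zero_pow Fintype.card_ne_zero]
    · exact h j (mem_Ioc.mpr ⟨hj1, hjδ⟩) hdvd

theorem syndrome_eq_zero_of_card_dvd [Fintype F] {α : E} {δ : ℕ} {c : Fin n → F}
    (hc : c ∈ bchCode F n α δ) (hδ : card F ∣ δ) :
    ∀ j, 1 ≤ j → j ≤ δ → syndrome α c j = 0 := by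
  intro j hj1 hjδ
  rcases Nat.lt_or_ge j δ with hj | hj
  · exact hc j hj1 (by omega)
  obtain ⟨k, rfl⟩ := hδ
  have hk : 0 < k := Nat.pos_of_mul_pos_left (by omega : 0 < card F * k)
  have hkj : k < card F * k := lt_mul_left hk Fintype.one_lt_card
  rw [show j = card F * k by omega, syndrome_card_mul, mem_bchCode_iff.mp hc k hk (by omega),
    zero_pow Fintype.card_ne_zero]

theorem card_pow_le_card_pow_mul_card_bchCode [Fintype F] [Fintype E] (α : E) (δ : ℕ) :
    card F ^ n ≤ card E ^ ((δ - 1) - (δ - 1) / card F) * Nat.card (bchCode F n α δ) := by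
  let J : Finset ℕ := {j ∈ Ioc 0 (δ - 1) | ¬ card F ∣ j}
  have hJ : #J = (δ - 1) - (δ - 1) / card F := by
    simp only [J]
    rw [filter_not, card_sdiff_of_subset (filter_subset _ _), Nat.card_Ioc,
      Nat.Ioc_filter_dvd_card_eq_div, Nat.sub_zero]
  let f : (Fin n → F) →+ (J → E) :=
    AddMonoidHom.mk' (fun c j => syndrome α c j) fun a b => funext fun j => syndrome_add α a b j
  have hker : f.ker = (bchCode F n α δ).toAddSubgroup := by
    ext c
    simp only [AddMonoidHom.mem_ker, Submodule.mem_toAddSubgroup, mem_bchCode_iff_of_not_dvd,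
      funext_iff]
    exact ⟨fun h j hj hdvd => h ⟨j, mem_filter.mpr ⟨hj, hdvd⟩⟩,
      fun h j => h j (mem_filter.mp j.2).1 (mem_filter.mp j.2).2⟩
  calc card F ^ n = Nat.card (Fin n → F) := by simp
    _ ≤ Nat.card f.ker * Nat.card (J → E) := f.card_le_card_ker_mul_card
    _ = card E ^ ((δ - 1) - (δ - 1) / card F) * Nat.card (bchCode F n α δ) := by
      rw [hker, Nat.card_fun, Nat.card_eq_fintype_card (α := E), Nat.card_eq_finsetCard, hJ,
        mul_comm]
      rfl

end BCHCode

section minDist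

variable {F : Type*} [Field F] [DecidableEq F] {n : ℕ} {C : Set (Fin n → F)}

theorem minDist_le_hammingNorm {c : Fin n → F} (hc : c ∈ C) (hc0 : c ≠ 0) :
    minDist C ≤ hammingNorm c :=
  Nat.sInf_le ⟨c, hc, hc0, rfl⟩

theorem exists_hammingNorm_eq_minDist (h : ∃ c ∈ C, c ≠ 0) :
    ∃ c ∈ C, c ≠ 0 ∧ hammingNorm c = minDist C := by
  obtain ⟨c, hc, hc0⟩ := h
  exact Nat.sInf_mem (s := {w | ∃ c ∈ C, c ≠ 0 ∧ hammingNorm c = w}) ⟨_, c, hc, hc0, rfl⟩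

end minDist

theorem bch_minDist_of_sphere_packing_general
    (q m : ℕ)
    (F E : Type*) [Field F] [Fintype F] [DecidableEq F] [Field E] [Fintype E]
    [Algebra F E]
    (hF : Fintype.card F = q) (hE : Fintype.card E = q ^ m)
    (α : E) (hα : orderOf α = q ^ m - 1)
    (δ : ℕ)
    (hsphere : q ^ (m * ((δ - 1) - (δ - 1) / q)) <
      ∑ i ∈ Finset.range ((δ + 1) / 2 + 1), (q ^ m - 1).choose i * (q - 1) ^ i) :
    (minDist (bchCode F (q ^ m - 1) α δ : Set (Fin (q ^ m - 1) → F)) = δ ∨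
      minDist (bchCode F (q ^ m - 1) α δ : Set (Fin (q ^ m - 1) → F)) = δ + 1) ∧
    (q ∣ δ →
      minDist (bchCode F (q ^ m - 1) α δ : Set (Fin (q ^ m - 1) → F)) = δ + 1) := by
  subst hF
  set C := bchCode F (card F ^ m - 1) α δ
  obtain ⟨c₀, hc₀, hc₀0, hc₀δ⟩ :=
    C.toAddSubgroup.exists_mem_ne_zero_hammingNorm_le ((δ + 1) / 2) <| by
      calc card F ^ card (Fin (card F ^ m - 1))
          ≤ card E ^ ((δ - 1) - (δ - 1) / card F) * Nat.card C := by
            simpa using card_pow_le_card_pow_mul_card_bchCode α δ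
        _ = Nat.card C * card F ^ (m * ((δ - 1) - (δ - 1) / card F)) := by
            rw [hE, ← pow_mul, mul_comm]
        _ < Nat.card C * ∑ i ∈ range ((δ + 1) / 2 + 1),
              (card (Fin (card F ^ m - 1))).choose i * (card F - 1) ^ i := by
            simpa using Nat.mul_lt_mul_of_pos_left hsphere (Nat.card_pos (α := C))
  obtain ⟨c, hc, hc0, hcd⟩ := exists_hammingNorm_eq_minDist (C := (C : Set _)) ⟨c₀, hc₀, hc₀0⟩
  have hupper := minDist_le_hammingNorm (C := (C : Set _)) hc₀ hc₀0
  have hlower := lt_hammingNorm_of_syndrome_eq_zero hα hc0 (mem_bchCode_iff.mp hc)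
  refine ⟨by omega, fun hdvd => ?_⟩
  have := lt_hammingNorm_of_syndrome_eq_zero hα hc0 (syndrome_eq_zero_of_card_dvd hc hdvd)
  omega

/-- Farr (sphere-packing) bound for BCH codes: if
`∑_{i=0}^{⌊(δ+1)/2⌋} C(q^m-1, i)(q-1)^i > q^{m⌈(δ-1)(1-1/q)⌉}`,
then the minimum distance `d` of the primitive, narrow-sense BCH code of
designed distance `δ` is `δ` or `δ + 1`, and if moreover `q ∣ δ` then
`d = δ + 1`. -/
theorem bch_minDist_of_sphere_packing
    (q m : ℕ) (hq : IsPrimePow q) (hm : 0 < m)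
    (F E : Type*) [Field F] [Fintype F] [DecidableEq F] [Field E] [Fintype E]
    [Algebra F E]
    (hF : Fintype.card F = q) (hE : Fintype.card E = q ^ m)
    (α : E) (hα : orderOf α = q ^ m - 1)
    (δ : ℕ) (hδ1 : 2 ≤ δ) (hδ2 : δ ≤ q ^ ((m + 1) / 2) + 1)
    (hsphere : q ^ (m * ((δ - 1) - (δ - 1) / q)) <
      ∑ i ∈ Finset.range ((δ + 1) / 2 + 1), (q ^ m - 1).choose i * (q - 1) ^ i) :
    (minDist (bchCode F (q ^ m - 1) α δ : Set (Fin (q ^ m - 1) → F)) = δ ∨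
      minDist (bchCode F (q ^ m - 1) α δ : Set (Fin (q ^ m - 1) → F)) = δ + 1) ∧
    (q ∣ δ →
      minDist (bchCode F (q ^ m - 1) α δ : Set (Fin (q ^ m - 1) → F)) = δ + 1) :=
  bch_minDist_of_sphere_packing_general q m F E hF hE α hα δ hsphere
end

section
/- Let q be a prime power, m ≥ 2 an integer, n = q^m − 1, and δ_max = q^{⌈m/2⌉} − 1 − (q−2)·[m is odd]. For every integer x with 1 ≤ x < δ_max, every element of the q-ary cyclotomic coset of n − x modulo n is at least δ_max; equivalently, min C_{−x} ≥ δ_max, where C_{−x} = {(n−x) q^ℓ mod n : ℓ ≥ 0}. -/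
/-- For `x < q ^ (r + ℓ)`, the cyclic rotation of the `r + ℓ` base-`q` digits of `x` that moves
the `r` low digits up by `ℓ` places. -/
def digitRotate (q r ℓ x : ℕ) : ℕ := x / q ^ r + x % q ^ r * q ^ ℓ

def deltaMax (q m : ℕ) : ℕ := q ^ ((m + 1) / 2) - 1 - (q - 2) * (if Odd m then 1 else 0)

theorem Nat.pow_modEq_pow_mod {q : ℕ} (hq : 0 < q) (m k : ℕ) :
    q ^ k ≡ q ^ (k % m) [MOD q ^ m - 1] := by
  have hone : (q ^ m) ^ (k / m) ≡ 1 [MOD q ^ m - 1] := by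
    simpa using (Nat.modEq_sub (Nat.one_le_pow m q hq)).pow (k / m)
  calc q ^ k = (q ^ m) ^ (k / m) * q ^ (k % m) := by
        rw [← pow_mul, ← pow_add, Nat.div_add_mod]
    _ ≡ 1 * q ^ (k % m) [MOD q ^ m - 1] := hone.mul_right _
    _ = q ^ (k % m) := one_mul _

theorem Nat.mod_eq_sub_of_add_modEq_zero {a b n : ℕ} (h : a + b ≡ 0 [MOD n]) (hb₀ : 0 < b)
    (hb : b < n) : a % n = n - b := by
  have hsub : a ≡ n - b [MOD n] := Nat.ModEq.add_right_cancel' b <| h.trans <| by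
    rw [Nat.sub_add_cancel hb.le]; exact (Nat.modEq_zero_iff_dvd.2 dvd_rfl).symm
  rw [hsub, Nat.mod_eq_of_lt (by omega)]

section digitRotate

variable {q r ℓ x : ℕ}

theorem mul_pow_modEq_digitRotate (hq : 0 < q) (x : ℕ) :
    x * q ^ ℓ ≡ digitRotate q r ℓ x [MOD q ^ (r + ℓ) - 1] := by
  have hone : q ^ (r + ℓ) ≡ 1 [MOD q ^ (r + ℓ) - 1] := Nat.modEq_sub (Nat.one_le_pow _ _ hq)
  calc x * q ^ ℓ = x / q ^ r * q ^ (r + ℓ) + x % q ^ r * q ^ ℓ := by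
        conv_lhs => rw [← Nat.div_add_mod x (q ^ r)]
        ring
    _ ≡ x / q ^ r * 1 + x % q ^ r * q ^ ℓ [MOD q ^ (r + ℓ) - 1] :=
        (hone.mul_left _).add_right _
    _ = digitRotate q r ℓ x := by rw [mul_one, digitRotate]

theorem digitRotate_pos (hq : 0 < q) (hx : 0 < x) : 0 < digitRotate q r ℓ x := by
  refine Nat.pos_of_ne_zero fun h ↦ hx.ne' ?_
  rw [digitRotate, Nat.add_eq_zero_iff, mul_eq_zero, or_iff_left (pow_pos hq ℓ).ne'] at h
  rw [← Nat.div_add_mod x (q ^ r), h.1, h.2, mul_zero, add_zero]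

theorem digitRotate_of_lt (hx : x < q ^ r) : digitRotate q r ℓ x = x * q ^ ℓ := by
  rw [digitRotate, Nat.div_eq_of_lt hx, Nat.mod_eq_of_lt hx, zero_add]

theorem digitRotate_add_pow_le {j : ℕ} (hq : 0 < q) (hx : x < q ^ (j + r)) :
    digitRotate q r ℓ x + q ^ ℓ + 1 ≤ q ^ j + q ^ (r + ℓ) := by
  have hhigh : x / q ^ r < q ^ j := by
    rw [Nat.div_lt_iff_lt_mul (pow_pos hq r), ← pow_add]; exact hx
  have hlow : (x % q ^ r + 1) * q ^ ℓ ≤ q ^ r * q ^ ℓ :=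
    Nat.mul_le_mul_right _ (Nat.mod_lt x (pow_pos hq r))
  rw [digitRotate, pow_add]
  linarith

theorem digitRotate_add_pow_le_of_even {s : ℕ} (hq : 0 < q) (hx : x < q ^ s)
    (h : r + ℓ = 2 * s) : digitRotate q r ℓ x + q ^ s ≤ q ^ (2 * s) := by
  by_cases hrs : s ≤ r
  · rw [digitRotate_of_lt (hx.trans_le (Nat.pow_le_pow_right hq hrs))]
    calc x * q ^ ℓ + q ^ s ≤ x * q ^ s + q ^ s := by
          gcongr; omega
      _ = (x + 1) * q ^ s := by ring
      _ ≤ q ^ s * q ^ s := Nat.mul_le_mul_right _ hx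
      _ = q ^ (2 * s) := by ring
  · obtain ⟨j, rfl⟩ : ∃ j, s = j + r := ⟨s - r, by omega⟩
    have hrot := digitRotate_add_pow_le (ℓ := ℓ) hq hx
    have hℓ : q ^ ℓ = q ^ j * q ^ (j + r) := by rw [← pow_add]; congr 1; omega
    have hj : 1 ≤ q ^ j := Nat.one_le_pow _ _ hq
    have hs : 1 ≤ q ^ (j + r) := Nat.one_le_pow _ _ hq
    rw [h] at hrot
    nlinarith

/-- For `a < q`, the rotation of `x = a q^s + q^s - 1` by `s + 1` places is
`q^(2s+1) - q^(s+1) + a`; for `a = q - 2` this makes the bound sharp, whence the correction by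
`q - 2` in `deltaMax` for odd `m`. -/
theorem digitRotate_self_succ_add_le {s : ℕ} (hq : 2 ≤ q) (hx : x + q ≤ q ^ (s + 1)) :
    digitRotate q s (s + 1) x + q ^ (s + 1) + 2 ≤ q ^ (2 * s + 1) + q := by
  have hP : 0 < q ^ s := pow_pos (by omega) s
  have hB := Nat.mod_lt x hP
  have hsucc : q ^ (s + 1) = q ^ s * q := pow_succ q s
  have hdouble : q ^ (2 * s + 1) = q ^ s * (q ^ s * q) := by ring
  rw [← Nat.div_add_mod x (q ^ s), hsucc] at hx
  rw [digitRotate, hsucc, hdouble]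
  generalize x / q ^ s = A at *
  generalize x % q ^ s = B at *
  generalize q ^ s = P at *
  rcases (Nat.succ_le_of_lt hB).eq_or_lt with rfl | hB
  · have hA : A + 1 < q := Nat.lt_of_mul_lt_mul_left (a := B + 1) (by nlinarith)
    nlinarith
  · have hA : A < q := Nat.lt_of_mul_lt_mul_left (a := P) (by nlinarith)
    have hlow : (B + 2) * (P * q) ≤ P * (P * q) := Nat.mul_le_mul_right _ hB
    nlinarith

theorem digitRotate_add_pow_le_of_odd {s : ℕ} (hq : 2 ≤ q) (hx : x + q ≤ q ^ (s + 1))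
    (h : r + ℓ = 2 * s + 1) : digitRotate q r ℓ x + q ^ (s + 1) + 2 ≤ q ^ (2 * s + 1) + q := by
  have hq₀ : 0 < q := by omega
  rcases lt_trichotomy r s with hrs | rfl | hrs
  · obtain ⟨j, rfl⟩ : ∃ j, s = j + 1 + r := ⟨s - r - 1, by omega⟩
    have hrot := digitRotate_add_pow_le (x := x) (ℓ := ℓ) (j := j + 2) hq₀
      (by rw [show j + 2 + r = j + 1 + r + 1 by ring]; omega)
    have ha : q ≤ q ^ (j + 1) := Nat.le_self_pow (by omega) q
    have hb : q ≤ q ^ (j + 1 + r) := Nat.le_self_pow (by omega) q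
    have hpow : q ^ ℓ = q * q ^ (j + 1) * q ^ (j + 1 + r) := by
      rw [← pow_succ', ← pow_add]; congr 1; omega
    rw [h, pow_succ' q (j + 1), hpow] at hrot
    rw [pow_succ' q (j + 1 + r)]
    nlinarith [Nat.mul_le_mul ha hb]
  · obtain rfl : ℓ = r + 1 := by omega
    exact digitRotate_self_succ_add_le hq hx
  · rw [digitRotate_of_lt ((Nat.lt_of_lt_of_le (by omega) hx).trans_le
      (Nat.pow_le_pow_right hq₀ hrs))]
    calc x * q ^ ℓ + q ^ (s + 1) + 2 ≤ x * q ^ s + q * q ^ s + q := by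
          gcongr
          · omega
          · exact (pow_succ' q s).le
      _ = (x + q) * q ^ s + q := by ring
      _ ≤ q ^ (s + 1) * q ^ s + q := by gcongr
      _ = q ^ (2 * s + 1) + q := by ring

end digitRotate

theorem digitRotate_add_deltaMax_lt {q m r ℓ x : ℕ} (hq : 2 ≤ q) (hx : x < deltaMax q m)
    (h : r + ℓ = m) : digitRotate q r ℓ x + deltaMax q m < q ^ m := by
  obtain ⟨s, rfl | rfl⟩ := Nat.even_or_odd' m
  · have hs : (2 * s + 1) / 2 = s := by omega
    simp only [deltaMax, hs, Nat.not_odd_iff_even.2 (even_two_mul s), if_false, mul_zero,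
      Nat.sub_zero] at hx ⊢
    have := digitRotate_add_pow_le_of_even (by omega : 0 < q) (by omega : x < q ^ s) h
    omega
  · have hs : (2 * s + 1 + 1) / 2 = s + 1 := by omega
    simp only [deltaMax, hs, odd_two_mul_add_one s, if_true, mul_one] at hx ⊢
    have := digitRotate_add_pow_le_of_odd hq (by omega : x + q ≤ q ^ (s + 1)) h
    omega

theorem cycCoset_neg_min_general
    (q m : ℕ) (hq : IsPrimePow q)
    (x : ℕ) (hx1 : 1 ≤ x)
    (hx2 : x < q ^ ((m + 1) / 2) - 1 - (q - 2) * (if Odd m then 1 else 0)) :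
    ∀ y ∈ cycCoset q (q ^ m - 1) (q ^ m - 1 - x),
      q ^ ((m + 1) / 2) - 1 - (q - 2) * (if Odd m then 1 else 0) ≤ y := by
  rintro _ ⟨k, rfl⟩
  change x < deltaMax q m at hx2
  change deltaMax q m ≤ _
  have hm : 0 < m := Nat.pos_of_ne_zero (by rintro rfl; simp [deltaMax] at hx2)
  set ℓ := k % m
  have hℓ : m - ℓ + ℓ = m := Nat.sub_add_cancel (Nat.mod_lt k hm).le
  have hbound := digitRotate_add_deltaMax_lt hq.two_le hx2 hℓ
  have hrot : x * q ^ k ≡ digitRotate q (m - ℓ) ℓ x [MOD q ^ m - 1] := by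
    have := mul_pow_modEq_digitRotate (r := m - ℓ) (ℓ := ℓ) hq.pos x
    rw [hℓ] at this
    exact ((Nat.pow_modEq_pow_mod hq.pos m k).mul_left x).trans this
  have hsum : (q ^ m - 1 - x) * q ^ k + x * q ^ k = (q ^ m - 1) * q ^ k := by
    rw [← add_mul, Nat.sub_add_cancel (by omega)]
  have hzero : (q ^ m - 1 - x) * q ^ k + digitRotate q (m - ℓ) ℓ x ≡ 0 [MOD q ^ m - 1] :=
    (hrot.symm.add_left _).trans (hsum ▸ Nat.modEq_zero_iff_dvd.2 (dvd_mul_right _ _))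
  rw [Nat.mod_eq_sub_of_add_modEq_zero hzero (digitRotate_pos hq.pos hx1) (by omega)]
  omega

/-- For `n = q^m - 1`, `m ≥ 2`, and `δ_max = q^⌈m/2⌉ - 1 - (q-2)·[m odd]`:
for every `1 ≤ x < δ_max`, every element of the `q`-ary cyclotomic coset of
`n - x` (i.e. of `-x` mod `n`) is at least `δ_max`. -/
theorem cycCoset_neg_min
    (q m : ℕ) (hq : IsPrimePow q) (hm : 2 ≤ m)
    (x : ℕ) (hx1 : 1 ≤ x)
    (hx2 : x < q ^ ((m + 1) / 2) - 1 - (q - 2) * (if Odd m then 1 else 0)) :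
    ∀ y ∈ cycCoset q (q ^ m - 1) (q ^ m - 1 - x),
      q ^ ((m + 1) / 2) - 1 - (q - 2) * (if Odd m then 1 else 0) ≤ y :=
  cycCoset_neg_min_general q m hq x hx1 hx2
end
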